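/- Let α ∈ (0,1). CVaR_α is subadditive under the Rockafellar–Uryasev representation: for integrable real random variables L₁, L₂ (on the same probability space), CVaR_α(L₁ + L₂) ≤ CVaR_α(L₁) + CVaR_α(L₂). -/

import Mathlib

open MeasureTheory

/-!
Write `F_L(t) = t + α⁻¹ E[(L - t)₊]`. Since `(x + y)₊ ≤ x₊ + y₊`, we get
`F_{L₁+L₂}(t + s) ≤ F_{L₁}(t) + F_{L₂}(s)` for all `t, s`; taking infima gives the claim.
The infimum on the left is an honest one (not the junk value of `⨅` on an
unbounded set) because `F_L(t) ≥ E[L]` when `α ≤ 1`.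
-/

section CVaR

variable {Ω : Type*} [MeasurableSpace Ω] {μ : Measure Ω}

/-- The Rockafellar–Uryasev objective, whose infimum over `t` is `CVaR_α(L)`. -/
noncomputable def cvarObjective (μ : Measure Ω) (α : ℝ) (L : Ω → ℝ) (t : ℝ) : ℝ :=
  t + (1 / α) * ∫ ω, max (L ω - t) 0 ∂μ

lemma MeasureTheory.Integrable.max_sub_const_zero [IsFiniteMeasure μ] {L : Ω → ℝ}
    (hL : Integrable L μ) (t : ℝ) : Integrable (fun ω => max (L ω - t) 0) μ :=
  (hL.sub (integrable_const t)).pos_part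

lemma max_add_sub_add_zero_le (a b t s : ℝ) :
    max (a + b - (t + s)) 0 ≤ max (a - t) 0 + max (b - s) 0 := by
  simpa only [add_sub_add_comm, add_zero] using max_add_add_le_max_add_max (a := a - t)
    (b := b - s) (c := (0 : ℝ)) (d := 0)

lemma integral_le_cvarObjective [IsProbabilityMeasure μ] {L : Ω → ℝ} (hL : Integrable L μ)
    {α : ℝ} (hα0 : 0 < α) (hα1 : α ≤ 1) (t : ℝ) :
    ∫ ω, L ω ∂μ ≤ cvarObjective μ α L t := by
  have hexcess : ∫ ω, L ω ∂μ - t ≤ ∫ ω, max (L ω - t) 0 ∂μ := by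
    have := integral_mono (f := fun ω => L ω - t) (hL.sub (integrable_const t))
      (hL.max_sub_const_zero t) fun ω => le_max_left (L ω - t) 0
    rwa [integral_sub hL (integrable_const t), integral_const, probReal_univ, smul_eq_mul,
      one_mul] at this
  have hscale : ∫ ω, max (L ω - t) 0 ∂μ ≤ (1 / α) * ∫ ω, max (L ω - t) 0 ∂μ :=
    le_mul_of_one_le_left (integral_nonneg fun ω => le_max_right _ _)
      (one_le_one_div hα0 hα1)
  unfold cvarObjective
  linarith

lemma bddBelow_range_cvarObjective [IsProbabilityMeasure μ] {L : Ω → ℝ} (hL : Integrable L μ)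
    {α : ℝ} (hα0 : 0 < α) (hα1 : α ≤ 1) : BddBelow (Set.range (cvarObjective μ α L)) :=
  ⟨∫ ω, L ω ∂μ, Set.forall_mem_range.2 (integral_le_cvarObjective hL hα0 hα1)⟩

lemma cvarObjective_add_le [IsFiniteMeasure μ] {L₁ L₂ : Ω → ℝ} (hL₁ : Integrable L₁ μ)
    (hL₂ : Integrable L₂ μ) {α : ℝ} (hα : 0 ≤ α) (t s : ℝ) :
    cvarObjective μ α (L₁ + L₂) (t + s) ≤ cvarObjective μ α L₁ t + cvarObjective μ α L₂ s := by
  have hexcess : ∫ ω, max (L₁ ω + L₂ ω - (t + s)) 0 ∂μ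
      ≤ ∫ ω, max (L₁ ω - t) 0 ∂μ + ∫ ω, max (L₂ ω - s) 0 ∂μ := by
    rw [← integral_add (hL₁.max_sub_const_zero t) (hL₂.max_sub_const_zero s)]
    exact integral_mono ((hL₁.add hL₂).max_sub_const_zero (t + s))
      ((hL₁.max_sub_const_zero t).add (hL₂.max_sub_const_zero s))
      fun ω => max_add_sub_add_zero_le _ _ _ _
  have := mul_le_mul_of_nonneg_left hexcess (one_div_nonneg.2 hα)
  simp only [cvarObjective, Pi.add_apply]
  linarith

end CVaR

/-- CVaR is subadditive: `CVaR_α(L₁ + L₂) ≤ CVaR_α(L₁) + CVaR_α(L₂)`. -/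
theorem cvar_subadditive
    {Ω : Type*} [MeasurableSpace Ω] (μ : Measure Ω) [IsProbabilityMeasure μ]
    (L₁ L₂ : Ω → ℝ) (hL₁ : Integrable L₁ μ) (hL₂ : Integrable L₂ μ)
    (α : ℝ) (hα0 : 0 < α) (hα1 : α < 1) :
    (⨅ t : ℝ, (t + (1 / α) * ∫ ω, max (L₁ ω + L₂ ω - t) 0 ∂μ))
      ≤ (⨅ t : ℝ, (t + (1 / α) * ∫ ω, max (L₁ ω - t) 0 ∂μ))
        + (⨅ t : ℝ, (t + (1 / α) * ∫ ω, max (L₂ ω - t) 0 ∂μ)) :=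
  le_ciInf_add_ciInf fun t s =>
    ciInf_le_of_le (bddBelow_range_cvarObjective (hL₁.add hL₂) hα0 hα1.le) (t + s)
      (cvarObjective_add_le hL₁ hL₂ hα0.le t s)
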